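/- arXiv:2401.01680 — 7 statements merged into one kernel-verified Lean document; each statement's English description precedes it below -/
import Mathlib

section
/- Let G be an ℕ-edge-weighted graph viewed as a weighted complete graph (with 0 on non-edges). Then the weighting is irregular (all weighted vertex degrees are pairwise distinct) if and only if |s(G * I(S(1)))| = |V(G)|. -/
def pairs (n : ℕ) : Finset (Fin n × Fin n) := Finset.univ.filter fun p => p.1 < p.2

def spec {R : Type*} [CommSemiring R] {n : ℕ} (H K : Fin n → Fin n → R) : Set R :=
  { s | ∃ f : Fin n ≃ Fin n, s = ∑ p ∈ pairs n, H p.1 p.2 * K (f p.1) (f p.2) }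

def starW {n : ℕ} (c : Fin n) : Fin n → Fin n → ℕ :=
  fun a b => if a ≠ b ∧ (a = c ∨ b = c) then 1 else 0

def wdeg {n : ℕ} (w : Fin n → Fin n → ℕ) (v : Fin n) : ℕ := ∑ u, w v u

/-!
Relabelling the vertices by `f` turns the star at `c` into the star at `f⁻¹ c`, so each element
of `s(G * I(S(c)))` is the total weight of the pairs at one vertex. Counting every ordered pair
twice, that total is half of `∑ a, ∑ b, w a b * starW v a b = 2 * wdeg w v`. Hence
`s(G * I(S(c)))` is the range of `wdeg w`, which has `n` elements exactly when `wdeg w` is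
injective.
-/

section

variable {n : ℕ}

theorem sum_pairs_add_sum_pairs {M : Type*} [AddCommMonoid M] (h : Fin n → Fin n → M)
    (hsymm : ∀ a b, h a b = h b a) (hdiag : ∀ a, h a a = 0) :
    ∑ p ∈ pairs n, h p.1 p.2 + ∑ p ∈ pairs n, h p.1 p.2 = ∑ a, ∑ b, h a b := by
  have hswap : ∑ p ∈ pairs n, h p.1 p.2 = ∑ p : Fin n × Fin n with p.2 < p.1, h p.1 p.2 :=
    Finset.sum_nbij' Prod.swap Prod.swap (by simp [pairs]) (by simp [pairs]) (by simp) (by simp)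
      (fun p _ => hsymm p.1 p.2)
  have hlower : ∑ p : Fin n × Fin n with p.2 < p.1, h p.1 p.2 =
      ∑ p : Fin n × Fin n with ¬ p.1 < p.2, h p.1 p.2 := by
    refine Finset.sum_subset (fun p => by simpa using le_of_lt) fun p hp hlt => ?_
    simp only [Finset.mem_filter, Finset.mem_univ, true_and, not_lt] at hp hlt
    rw [le_antisymm hlt hp, hdiag]
  rw [← Fintype.sum_prod_type',
    ← Finset.sum_filter_add_sum_filter_not Finset.univ fun p => p.1 < p.2, ← hlower, ← hswap,
    pairs]

theorem starW_comm (c a b : Fin n) : starW c a b = starW c b a := by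
  simp only [starW, ne_comm, or_comm]

theorem starW_apply_equiv (c : Fin n) (f : Fin n ≃ Fin n) (a b : Fin n) :
    starW c (f a) (f b) = starW (f.symm c) a b := by
  simp only [starW, ne_eq, f.injective.eq_iff, ← f.eq_symm_apply]

theorem mul_starW (w : Fin n → Fin n → ℕ) (hdiag : ∀ a, w a a = 0) (v a b : Fin n) :
    w a b * starW v a b = (if a = v then w a b else 0) + (if b = v then w a b else 0) := by
  by_cases hab : a = b
  · subst hab
    simp [hdiag]
  · unfold starW
    split_ifs <;> simp_all

theorem sum_sum_mul_starW (w : Fin n → Fin n → ℕ) (hsymm : ∀ a b, w a b = w b a)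
    (hdiag : ∀ a, w a a = 0) (v : Fin n) :
    ∑ a, ∑ b, w a b * starW v a b = wdeg w v + wdeg w v := by
  simp only [mul_starW w hdiag, Finset.sum_add_distrib, Finset.sum_ite_eq', Finset.mem_univ,
    if_true]
  rw [Fintype.sum_eq_single v fun a ha => by simp [ha]]
  simp only [if_true, wdeg, ← hsymm v]

theorem sum_pairs_mul_starW (w : Fin n → Fin n → ℕ) (hsymm : ∀ a b, w a b = w b a)
    (hdiag : ∀ a, w a a = 0) (v : Fin n) :
    ∑ p ∈ pairs n, w p.1 p.2 * starW v p.1 p.2 = wdeg w v := by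
  have hdouble := (sum_pairs_add_sum_pairs (fun a b => w a b * starW v a b)
    (fun a b => by rw [hsymm, starW_comm]) (fun a => by rw [hdiag, zero_mul])).trans
    (sum_sum_mul_starW w hsymm hdiag v)
  omega

theorem spec_starW (w : Fin n → Fin n → ℕ) (hsymm : ∀ a b, w a b = w b a)
    (hdiag : ∀ a, w a a = 0) (c : Fin n) :
    spec w (starW c) = Set.range (wdeg w) := by
  ext s
  simp only [spec, starW_apply_equiv, sum_pairs_mul_starW w hsymm hdiag, Set.mem_ofPred_eq,
    Set.mem_range, eq_comm]
  exact ⟨fun ⟨f, hf⟩ => ⟨f.symm c, hf⟩,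
    fun ⟨v, hv⟩ => ⟨Equiv.swap c v, by simpa using hv⟩⟩

theorem ncard_range_eq_iff_injective {α β : Type*} [Finite α] (f : α → β) :
    (Set.range f).ncard = Nat.card α ↔ Function.Injective f := by
  rw [← Set.image_univ, ← Set.ncard_univ, Set.ncard_image_iff, Set.injOn_univ]

end

/-- An `ℕ`-weighting (with `0` on non-edges) is irregular, i.e. all weighted degrees are
pairwise distinct, iff `|s(G * I(S(1)))| = |V(G)|`. -/
theorem irregular_iff_spec_card {n : ℕ} (hn : 1 ≤ n)
    (G : SimpleGraph (Fin n)) [DecidableRel G.Adj]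
    (w : Fin n → Fin n → ℕ) (hsymm : ∀ a b, w a b = w b a)
    (hzero : ∀ a b, ¬ G.Adj a b → w a b = 0) :
    Function.Injective (wdeg w) ↔ (spec w (starW (⟨0, hn⟩ : Fin n))).ncard = n := by
  have hdiag : ∀ a, w a a = 0 := fun a => hzero a a (G.loopless.irrefl a)
  rw [spec_starW w hsymm hdiag, ← ncard_range_eq_iff_injective, Nat.card_fin]
end

section
/- Let G be an ℕ-edge-weighted graph with a locally irregular weighting, viewed as a ℂ-weighted complete graph with 0 on non-edges. Then for every pair j < k in {1,...,|V(G)|} and every bijection f : V(G) → {1,...,|V(G)|}, the sum s(G *_f J(j,k)) is not a nonzero purely imaginary number, where J(j,k) is the ℂ-weighted complete graph with weight i on edge {j,k}, weight 1 on other edges incident to j, weight -1 on other edges incident to k, and 0 elsewhere. -/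
/-- The `ℂ`-weighted complete graph `J(j,k)`: weight `i` on the edge `{j,k}`, weight `1`
on other edges incident to `j`, weight `-1` on other edges incident to `k`, `0` elsewhere. -/
def Jw {n : ℕ} (j k : Fin n) : Fin n → Fin n → ℂ := fun a b =>
  if (a = j ∧ b = k) ∨ (a = k ∧ b = j) then Complex.I
  else if (a = j ∨ b = j) ∧ a ≠ b then 1
  else if (a = k ∨ b = k) ∧ a ≠ b then -1
  else 0

/-! Since `f` is a bijection, `s(G *_f J(j,k))` only sees the vertices `a = f⁻¹ j` and
`b = f⁻¹ k`: the edge `ab` contributes `i ν(ab)`, every other edge at `a` its weight and every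
other edge at `b` minus its weight, so `s = w(a) - w(b) + i ν(ab)`. A vanishing real part
forces `w(a) = w(b)`; by local irregularity `a` and `b` are then not adjacent, so `ν(ab) = 0`. -/

open Finset

theorem two_nsmul_sum_pairs {n : ℕ} {M : Type*} [AddCommMonoid M] (F : Fin n × Fin n → M)
    (hF : ∀ p, F p.swap = F p) (hdiag : ∀ x, F (x, x) = 0) :
    2 • ∑ p ∈ pairs n, F p = ∑ p, F p := by
  have hsplit : ∀ p : Fin n × Fin n,
      F p = (if p.1 < p.2 then F p else 0) + (if p.2 < p.1 then F p.swap else 0) := by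
    rintro ⟨a, b⟩
    rcases lt_trichotomy a b with h | rfl | h
    · simp [h, h.not_gt]
    · simp [hdiag]
    · simpa [h, h.not_gt] using (hF (a, b)).symm
  have hswap : ∑ p : Fin n × Fin n, (if p.2 < p.1 then F p.swap else 0)
      = ∑ p : Fin n × Fin n, if p.1 < p.2 then F p else 0 :=
    Fintype.sum_equiv (Equiv.prodComm _ _) _ _ fun _ => rfl
  calc 2 • ∑ p ∈ pairs n, F p
      = (∑ p : Fin n × Fin n, if p.1 < p.2 then F p else 0)
        + ∑ p : Fin n × Fin n, if p.2 < p.1 then F p.swap else 0 := by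
        rw [hswap, pairs, sum_filter, two_nsmul]
    _ = ∑ p, F p := by
        rw [← sum_add_distrib]
        exact sum_congr rfl fun p _ => (hsplit p).symm

theorem Jw_comm {n : ℕ} (j k x y : Fin n) : Jw j k x y = Jw j k y x := by
  unfold Jw
  grind

theorem Jw_apply_of_injective {n m : ℕ} {f : Fin n → Fin m} (hf : Function.Injective f)
    (a b x y : Fin n) : Jw (f a) (f b) (f x) (f y) = Jw a b x y := by
  simp only [Jw, ne_eq, hf.eq_iff]

theorem Jw_of_ne {n : ℕ} {j k x y : Fin n} (hjk : j ≠ k) (hxy : x ≠ y) :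
    Jw j k x y = (if x = j then 1 else 0) + (if y = j then 1 else 0)
      - (if x = k then 1 else 0) - (if y = k then 1 else 0)
      + Complex.I * ((if x = j ∧ y = k then 1 else 0) + (if x = k ∧ y = j then 1 else 0)) := by
  unfold Jw
  split_ifs <;> grind

theorem sum_sum_mul_Jw {n : ℕ} {j k : Fin n} (hjk : j ≠ k) (c : Fin n → Fin n → ℂ)
    (hc : ∀ x y, c x y = c y x) (hdiag : ∀ x, c x x = 0) :
    ∑ x, ∑ y, c x y * Jw j k x y
      = 2 * (∑ y, c j y - ∑ y, c k y) + 2 * Complex.I * c j k := by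
  have hexpand : ∀ x y, c x y * Jw j k x y
      = c x y * ((if x = j then 1 else 0) + (if y = j then 1 else 0)
      - (if x = k then 1 else 0) - (if y = k then 1 else 0)
      + Complex.I * ((if x = j ∧ y = k then 1 else 0) + (if x = k ∧ y = j then 1 else 0))) := by
    intro x y
    rcases eq_or_ne x y with rfl | hxy
    · simp [hdiag]
    · rw [Jw_of_ne hjk hxy]
  have hcol : ∀ z, ∑ x, c x z = ∑ y, c z y := fun z => sum_congr rfl fun x _ => hc x z
  simp only [hexpand, mul_add, mul_sub, mul_ite, mul_one, mul_zero, sum_add_distrib,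
    sum_sub_distrib, ite_and, sum_ite_irrel, sum_const_zero, sum_ite_eq', mem_univ, if_true,
    hcol, hc k j]
  ring

theorem sum_pairs_mul_Jw {n : ℕ} {j k : Fin n} (hjk : j ≠ k) (c : Fin n → Fin n → ℂ)
    (hc : ∀ x y, c x y = c y x) (hdiag : ∀ x, c x x = 0) :
    ∑ p ∈ pairs n, c p.1 p.2 * Jw j k p.1 p.2
      = ∑ y, c j y - ∑ y, c k y + Complex.I * c j k := by
  have hdouble := two_nsmul_sum_pairs (fun p => c p.1 p.2 * Jw j k p.1 p.2)
    (fun p => by simp only [Prod.fst_swap, Prod.snd_swap, hc p.2, Jw_comm j k p.2])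
    (fun x => by simp only [hdiag, zero_mul])
  rw [Fintype.sum_prod_type, sum_sum_mul_Jw hjk c hc hdiag, nsmul_eq_mul, Nat.cast_ofNat] at hdouble
  apply mul_left_cancel₀ (two_ne_zero (α := ℂ))
  rw [hdouble]
  ring

theorem locallyIrregular_spec_J_all_general {n : ℕ}
    (G : SimpleGraph (Fin n))
    (w : Fin n → Fin n → ℕ) (hsymm : ∀ a b, w a b = w b a)
    (hzero : ∀ a b, ¬ G.Adj a b → w a b = 0)
    (hli : ∀ a b : Fin n, G.Adj a b → wdeg w a ≠ wdeg w b) :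
    ∀ j k : Fin n, j < k → ∀ f : Fin n ≃ Fin n,
      (∑ p ∈ pairs n, (w p.1 p.2 : ℂ) * Jw j k (f p.1) (f p.2)).re = 0 →
      (∑ p ∈ pairs n, (w p.1 p.2 : ℂ) * Jw j k (f p.1) (f p.2)) = 0 := by
  intro j k hjk f hre
  obtain ⟨a, rfl⟩ := f.surjective j
  obtain ⟨b, rfl⟩ := f.surjective k
  have hsum : ∑ p ∈ pairs n, (w p.1 p.2 : ℂ) * Jw (f a) (f b) (f p.1) (f p.2)
      = (wdeg w a : ℂ) - wdeg w b + Complex.I * w a b := by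
    simp only [Jw_apply_of_injective f.injective]
    rw [sum_pairs_mul_Jw (ne_of_apply_ne f hjk.ne) (fun x y => (w x y : ℂ))
      (fun x y => by rw [hsymm]) (fun x => by simp [hzero x x (G.loopless.irrefl x)])]
    simp only [wdeg, Nat.cast_sum]
  rw [hsum] at hre ⊢
  have hdeg : wdeg w a = wdeg w b := by simpa [sub_eq_zero] using hre
  have hwab : w a b = 0 := hzero a b fun hadj => hli a b hadj hdeg
  simp [hdeg, hwab]

/-- If the weighting of `G` is locally irregular then for all `j < k` and every bijection
`f`, the sum `s(G *_f J(j,k))` is not a nonzero purely imaginary number. -/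
theorem locallyIrregular_spec_J_all {n : ℕ} (hn : 2 ≤ n)
    (G : SimpleGraph (Fin n)) [DecidableRel G.Adj]
    (w : Fin n → Fin n → ℕ) (hsymm : ∀ a b, w a b = w b a)
    (hzero : ∀ a b, ¬ G.Adj a b → w a b = 0)
    (hli : ∀ a b : Fin n, G.Adj a b → wdeg w a ≠ wdeg w b) :
    ∀ j k : Fin n, j < k → ∀ f : Fin n ≃ Fin n,
      (∑ p ∈ pairs n, (w p.1 p.2 : ℂ) * Jw j k (f p.1) (f p.2)).re = 0 →
      (∑ p ∈ pairs n, (w p.1 p.2 : ℂ) * Jw j k (f p.1) (f p.2)) = 0 :=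
  locallyIrregular_spec_J_all_general G w hsymm hzero hli
end

section
/- Let G be a finite simple unweighted graph on n vertices, k ∈ {1,...,n-1}, and let f : {1,...,n} → V(G) be a bijection. Define the ℝ[x]-weighted complete graph D_k[x] on {1,...,n} by ν(j,l) = x^{j-1} if j < l, j ≤ n-k < l, and ν(j,l) = 0 otherwise. Then f({n-k+1, ..., n}) is a dominating set of G if and only if every coefficient coef_j of s(D_k[x] *_f I(G)) for j ∈ {0,...,n-k-1} is nonzero. -/
open Polynomial

/-- The `ℝ[x]`-weighted complete graph `D_k[x]` (vertices `1,…,n` written as `Fin n`):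
the edge `{j,l}` with `j < l`, `j ≤ n-k < l` (1-indexed) gets weight `x^(j-1)`,
all other edges weight `0`. -/
noncomputable def Dk (n k : ℕ) : Fin n → Fin n → Polynomial ℝ := fun a b =>
  if a < b ∧ a.val < n - k ∧ n - k ≤ b.val then X ^ a.val
  else if b < a ∧ b.val < n - k ∧ n - k ≤ a.val then X ^ b.val
  else 0

lemma coeff_term {n k : ℕ} (G : SimpleGraph (Fin n)) [DecidableRel G.Adj]
    (f : Fin n ≃ Fin n) (j : ℕ) (hjk : j < n - k) (p : Fin n × Fin n) (hp : p ∈ pairs n) :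
    (Dk n k p.1 p.2 * (if G.Adj (f p.1) (f p.2) then 1 else 0)).coeff j =
      if p.1.val = j ∧ n - k ≤ p.2.val ∧ G.Adj (f p.1) (f p.2) then (1:ℝ) else 0 := by
  have hlt : p.1 < p.2 := by simpa [pairs] using hp
  have hlt' : ¬ p.2 < p.1 := not_lt.mpr hlt.le
  unfold Dk
  by_cases hadj : G.Adj (f p.1) (f p.2)
  · by_cases hc : p.1.val < n - k ∧ n - k ≤ p.2.val
    · obtain ⟨hc1, hc2⟩ := hc
      rw [if_pos ⟨hlt, hc1, hc2⟩, if_pos hadj, mul_one, coeff_X_pow]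
      by_cases hj : j = p.1.val
      · rw [if_pos hj, if_pos ⟨hj.symm, hc2, hadj⟩]
      · rw [if_neg hj, if_neg fun h => hj h.1.symm]
    · rw [if_pos hadj, mul_one, if_neg (by tauto), if_neg (fun h => hlt' h.1),
        Polynomial.coeff_zero,
        if_neg (by rintro ⟨h1, h2, _⟩; exact hc ⟨by omega, h2⟩)]
  · rw [if_neg hadj, mul_zero, Polynomial.coeff_zero, if_neg (fun h => hadj h.2.2)]

/-- `f({n-k+1,…,n})` is a dominating set of `G` iff all coefficients
`coef_j` of `s(D_k[x] *_f I(G))`, `j ∈ {0,…,n-k-1}`, are nonzero. -/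
theorem dominating_iff_coeffs_ne_zero {n k : ℕ} (hk1 : 1 ≤ k) (hk2 : k ≤ n - 1)
    (G : SimpleGraph (Fin n)) [DecidableRel G.Adj] (f : Fin n ≃ Fin n) :
    (∀ v : Fin n, ¬ (n - k ≤ (f.symm v).val) →
        ∃ u : Fin n, n - k ≤ (f.symm u).val ∧ G.Adj v u) ↔
    ∀ j < n - k,
      (∑ p ∈ pairs n,
          Dk n k p.1 p.2 * (if G.Adj (f p.1) (f p.2) then 1 else 0)).coeff j ≠ 0 := by
  have hcoef : ∀ j, j < n - k →
      (∑ p ∈ pairs n,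
          Dk n k p.1 p.2 * (if G.Adj (f p.1) (f p.2) then 1 else 0)).coeff j =
      ∑ p ∈ pairs n,
        (if p.1.val = j ∧ n - k ≤ p.2.val ∧ G.Adj (f p.1) (f p.2) then (1:ℝ) else 0) := by
    intro j hjk
    rw [Polynomial.finset_sum_coeff]
    exact Finset.sum_congr rfl fun p hp => coeff_term G f j hjk p hp
  constructor
  · intro hdom j hj
    rw [hcoef j hj]
    have hjn : j < n := by omega
    obtain ⟨u, hu1, hu2⟩ := hdom (f ⟨j, hjn⟩) (by simp; omega)
    have hpair : ((⟨j, hjn⟩ : Fin n), f.symm u) ∈ pairs n := by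
      simp only [pairs, Finset.mem_filter, Finset.mem_univ, true_and, Fin.lt_def]
      omega
    have hpos : (0:ℝ) < ∑ p ∈ pairs n,
        (if p.1.val = j ∧ n - k ≤ p.2.val ∧ G.Adj (f p.1) (f p.2) then (1:ℝ) else 0) := by
      apply Finset.sum_pos' (fun p _ => by positivity)
      refine ⟨((⟨j, hjn⟩ : Fin n), f.symm u), hpair, ?_⟩
      have hco : ((⟨j, hjn⟩ : Fin n)).val = j ∧ n - k ≤ (f.symm u).val ∧
          G.Adj (f ⟨j, hjn⟩) (f (f.symm u)) :=
        ⟨rfl, hu1, by rwa [f.apply_symm_apply]⟩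
      rw [if_pos hco]; norm_num
    exact hpos.ne'
  · intro hc v hv
    have hj : (f.symm v).val < n - k := by omega
    have := hc (f.symm v).val hj
    rw [hcoef _ hj] at this
    obtain ⟨p, hp, hne⟩ := Finset.exists_ne_zero_of_sum_ne_zero this
    have hcond : p.1.val = (f.symm v).val ∧ n - k ≤ p.2.val ∧ G.Adj (f p.1) (f p.2) := by
      by_contra h
      rw [if_neg h] at hne
      exact hne rfl
    have hp1 : p.1 = f.symm v := Fin.ext hcond.1
    refine ⟨f p.2, by simp [hcond.2.1], ?_⟩
    have hfp : f p.1 = v := by rw [hp1, f.apply_symm_apply]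
    rw [← hfp]; exact hcond.2.2
end

section
/- With the notation of the domination lemma: if D = f({n-k+1,...,n}), then for each j ∈ {0,...,n-k-1}, the coefficient of x^j in s(D_k[x] *_f I(G)) equals |N_G(f(j+1)) ∩ D|, the number of neighbors of the vertex f(j+1) lying in D. -/
open Polynomial

/-- With `D = f({n-k+1,…,n})`, the coefficient of `x^j` in `s(D_k[x] *_f I(G))`
equals `|N_G(f(j+1)) ∩ D|`. -/
theorem coeff_eq_card_neighbors_in_D {n k : ℕ} (hk1 : 1 ≤ k) (hk2 : k ≤ n - 1)
    (G : SimpleGraph (Fin n)) [DecidableRel G.Adj] (f : Fin n ≃ Fin n) :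
    ∀ j : ℕ, (hj : j < n - k) →
      (∑ p ∈ pairs n,
          Dk n k p.1 p.2 * (if G.Adj (f p.1) (f p.2) then 1 else 0)).coeff j =
      (((G.neighborFinset (f ⟨j, by omega⟩)).filter
          fun u => n - k ≤ (f.symm u).val).card : ℝ) := by
  intro j hj
  have hjn : j < n := by omega
  have step1 : (∑ p ∈ pairs n,
          Dk n k p.1 p.2 * (if G.Adj (f p.1) (f p.2) then 1 else 0)).coeff j =
      ∑ p ∈ pairs n,
        (if p.1.val = j ∧ n - k ≤ p.2.val ∧ G.Adj (f p.1) (f p.2) then (1:ℝ) else 0) := by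
    rw [Polynomial.finset_sum_coeff]
    refine Finset.sum_congr rfl ?_
    rintro ⟨a, b⟩ hp
    simp only [pairs, Finset.mem_filter, Finset.mem_univ, true_and] at hp
    unfold Dk
    have hnba : ¬ (b < a ∧ b.val < n - k ∧ n - k ≤ a.val) := by
      rintro ⟨h, -⟩; exact absurd hp (not_lt.mpr h.le)
    simp only [if_neg hnba]
    by_cases hadj : G.Adj (f a) (f b)
    · simp only [if_pos hadj, mul_one]
      by_cases hc : a < b ∧ a.val < n - k ∧ n - k ≤ b.val
      · rw [if_pos hc, Polynomial.coeff_X_pow]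
        by_cases haj : a.val = j
        · simp [haj, hadj, hc.2.2]
        · rw [if_neg (Ne.symm haj)]
          rw [if_neg (by tauto)]
      · rw [if_neg hc]
        rw [if_neg (by
          rintro ⟨h1, h2, h3⟩
          exact hc ⟨hp, by omega, h2⟩)]
        simp
    · simp [hadj]
  rw [step1, Finset.sum_boole]
  norm_cast
  refine Finset.card_bij (fun p _ => f p.2) ?_ ?_ ?_
  · rintro ⟨a, b⟩ hp
    simp only [Finset.mem_filter, pairs, Finset.mem_univ, true_and] at hp
    obtain ⟨hab, haj, hb, hadj⟩ := hp
    simp only [Finset.mem_filter, SimpleGraph.mem_neighborFinset, Equiv.symm_apply_apply]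
    constructor
    · convert hadj.symm.symm using 2
      apply Fin.ext
      simpa using haj.symm
    · exact hb
  · rintro ⟨a, b⟩ hp ⟨c, d⟩ hq h
    simp only [Finset.mem_filter, pairs, Finset.mem_univ, true_and] at hp hq
    have hbd : b = d := f.injective h
    have : a = c := Fin.ext (hp.2.1.trans hq.2.1.symm)
    simp [this, hbd]
  · intro u hu
    simp only [Finset.mem_filter, SimpleGraph.mem_neighborFinset] at hu
    refine ⟨(⟨j, hjn⟩, f.symm u), ?_, by simp⟩
    simp only [Finset.mem_filter, pairs, Finset.mem_univ, true_and, Equiv.apply_symm_apply]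
    exact ⟨by simp only [Fin.lt_def]; omega, hu.2, hu.1⟩
end

section
/- Let G be a finite simple graph on n vertices and k ∈ {1,...,n-1}. Then G has a dominating set of cardinality k if and only if there exists a polynomial p ∈ s(D_k[x] * I(G)) (i.e., p = s(D_k[x] *_f I(G)) for some bijection f) whose coefficients coef_j(p) are nonzero for all j ∈ {0,...,n-k-1}. -/
open Polynomial

lemma exists_perm_equiv {n k : ℕ} (hkn : k ≤ n) (D : Finset (Fin n)) (hD : D.card = k) :
    ∃ f : Fin n ≃ Fin n, ∀ i : Fin n, f i ∈ D ↔ n - k ≤ i.val := by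
  set m := n - k with hm
  have hnm : n = m + k := by omega
  have hDc : Dᶜ.card = m := by
    rw [Finset.card_compl, hD, Fintype.card_fin]
  classical
  let e2l : Fin m ≃ ↥Dᶜ := (finCongr hDc.symm).trans Dᶜ.equivFin.symm
  let e2r : Fin k ≃ ↥D := (finCongr hD.symm).trans D.equivFin.symm
  let e3 : ↥Dᶜ ⊕ ↥D ≃ Fin n :=
    (Equiv.sumComm _ _).trans
      (((Equiv.refl ↥D).sumCongr (Equiv.subtypeEquivRight (fun a => by simp))).trans
        (Equiv.sumCompl (· ∈ D)))
  refine ⟨(finCongr hnm).trans (finSumFinEquiv.symm.trans ((e2l.sumCongr e2r).trans e3)), fun i => ?_⟩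
  rcases h : finSumFinEquiv.symm (finCongr hnm i) with a | b
  · have hval : (i : ℕ) = a.val := by
      have := congrArg Fin.val (congrArg finSumFinEquiv h)
      simpa using this
    simp only [Equiv.trans_apply, h, Equiv.sumCongr_apply, Sum.map_inl, e3,
      Equiv.sumComm_apply, Sum.swap_inl, Sum.map_inr, Equiv.sumCompl_apply_inr,
      Equiv.subtypeEquivRight_apply]
    exact iff_of_false (Finset.mem_compl.mp (e2l a).prop) (by omega)
  · have hval : (i : ℕ) = m + b.val := by
      have := congrArg Fin.val (congrArg finSumFinEquiv h)
      simpa using this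
    simp only [Equiv.trans_apply, h, Equiv.sumCongr_apply, Sum.map_inr, e3,
      Equiv.sumComm_apply, Sum.swap_inr, Sum.map_inl, Equiv.sumCompl_apply_inl,
      Equiv.refl_apply]
    exact iff_of_true (e2r b).prop (by omega)

/-- `G` has a dominating set of cardinality `k` iff some polynomial in
`s(D_k[x] * I(G))` has all coefficients `coef_j`, `j ∈ {0,…,n-k-1}`, nonzero. -/
theorem exists_dominating_iff_spec {n k : ℕ} (hk1 : 1 ≤ k) (hk2 : k ≤ n - 1)
    (G : SimpleGraph (Fin n)) [DecidableRel G.Adj] :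
    (∃ D : Finset (Fin n), D.card = k ∧ ∀ v ∉ D, ∃ u ∈ D, G.Adj v u) ↔
    ∃ f : Fin n ≃ Fin n, ∀ j < n - k,
      (∑ p ∈ pairs n,
          Dk n k p.1 p.2 * (if G.Adj (f p.1) (f p.2) then 1 else 0)).coeff j ≠ 0 := by
  classical
  have hn2 : 2 ≤ n := by omega
  have hkn : k < n := by omega
  have hcoeff : ∀ (f : Fin n ≃ Fin n) (j : ℕ),
      (∑ p ∈ pairs n, Dk n k p.1 p.2 * (if G.Adj (f p.1) (f p.2) then 1 else 0)).coeff j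
      = (((pairs n).filter fun p => p.1.val < n - k ∧ n - k ≤ p.2.val ∧ p.1.val = j ∧
          G.Adj (f p.1) (f p.2)).card : ℝ) := by
    intro f j
    rw [Polynomial.finset_sum_coeff, Finset.card_filter]
    push_cast
    refine Finset.sum_congr rfl fun p hp => ?_
    have hlt : p.1 < p.2 := by simpa [pairs] using hp
    have hnlt : ¬ p.2 < p.1 := fun h => absurd hlt (asymm h)
    simp only [Dk, hlt, hnlt, true_and, false_and, if_false, mul_ite, mul_one, mul_zero]
    split_ifs <;> simp_all [coeff_X_pow] <;> omega
  constructor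
  · rintro ⟨D, hDcard, hdom⟩
    obtain ⟨f, hf⟩ := exists_perm_equiv hkn.le D hDcard
    refine ⟨f, fun j hj => ?_⟩
    rw [hcoeff]
    have hjn : j < n := by omega
    set a : Fin n := ⟨j, hjn⟩ with ha
    have haD : f a ∉ D := by rw [hf]; simp only [ha]; omega
    obtain ⟨u, huD, hadj⟩ := hdom (f a) haD
    set b := f.symm u with hbdef
    have hbu : f b = u := f.apply_symm_apply u
    have hb : n - k ≤ b.val := (hf b).mp (hbu ▸ huD)
    have hab : a < b := by rw [Fin.lt_def]; simp only [ha]; omega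
    have hmem : (a, b) ∈ (pairs n).filter fun p => p.1.val < n - k ∧ n - k ≤ p.2.val ∧
        p.1.val = j ∧ G.Adj (f p.1) (f p.2) := by
      rw [Finset.mem_filter]
      refine ⟨by simp [pairs, hab], by simpa [ha] using hj, hb, rfl, ?_⟩
      rw [hbu]; exact hadj
    exact Nat.cast_ne_zero.mpr (Finset.card_ne_zero.mpr ⟨(a, b), hmem⟩)
  · rintro ⟨f, hcoef⟩
    refine ⟨(Finset.univ.filter fun i : Fin n => n - k ≤ i.val).image f, ?_, ?_⟩
    · rw [Finset.card_image_of_injective _ f.injective]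
      have heq : (Finset.univ.filter fun i : Fin n => n - k ≤ i.val)
          = Finset.Ici (⟨n - k, by omega⟩ : Fin n) := by
        ext i; simp [Fin.le_def]
      rw [heq, Fin.card_Ici]
      simp only []
      omega
    · intro v hv
      have hvj : (f.symm v).val < n - k := by
        by_contra h
        push_neg at h
        exact hv (Finset.mem_image.mpr ⟨f.symm v, by simp only [Finset.mem_filter, Finset.mem_univ, true_and]; exact h, by simp⟩)
      have hne := hcoef (f.symm v).val hvj
      rw [hcoeff] at hne
      have hcard : ((pairs n).filter fun p => p.1.val < n - k ∧ n - k ≤ p.2.val ∧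
          p.1.val = (f.symm v).val ∧ G.Adj (f p.1) (f p.2)).card ≠ 0 := by
        exact_mod_cast hne
      obtain ⟨⟨a, b⟩, hab⟩ := Finset.card_ne_zero.mp hcard
      rw [Finset.mem_filter] at hab
      obtain ⟨_, h1, h2, h3, h4⟩ := hab
      have ha : a = f.symm v := Fin.ext h3
      refine ⟨f b, Finset.mem_image.mpr ⟨b, by simp only [Finset.mem_filter, Finset.mem_univ, true_and]; exact h2, rfl⟩, ?_⟩
      rw [ha] at h4
      simpa using h4
end

section
/- Let G be a finite simple graph and H an assignment of values in {0, -1, y} ⊆ ℤ[y] to the edges of G (with 0 on non-edges), defining f̃ : E(G) → {0,1,2} by -1 ↦ 0, 0 ↦ 1, y ↦ 2. Then f̃ is an edge Roman dominating function of G (every edge with f̃ = 0 is adjacent to an edge with f̃ = 2) if and only if for every bijection g : V(G) → {1,...,|V(G)|}, the sum s(H *_g R(1,2)) is not of the form -i + m for any integer m, where R(1,2) is the ℂ[y]-weighted complete graph with weight i on edge {1,2}, weight 1 on edges meeting {1,2} in exactly one vertex, and 0 elsewhere. -/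
open Polynomial

/-- The `ℂ`-weighted complete graph `R(j,k)`: weight `i` on the edge `{j,k}`, weight `1`
on edges meeting `{j,k}` in exactly one vertex, `0` elsewhere. -/
def Rw {n : ℕ} (j k : Fin n) : Fin n → Fin n → ℂ := fun a b =>
  if (a = j ∧ b = k) ∨ (a = k ∧ b = j) then Complex.I
  else if ((a = j ∨ b = j) ∨ (a = k ∨ b = k)) ∧ a ≠ b then 1
  else 0

lemma Rw_eq_I {n : ℕ} {j k a b : Fin n} (h : (a = j ∧ b = k) ∨ (a = k ∧ b = j)) :
    Rw j k a b = Complex.I := by simp [Rw, h]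

lemma Rw_eq_one {n : ℕ} {j k a b : Fin n}
    (h : ((a = j ∨ b = j) ∨ (a = k ∨ b = k)) ∧ a ≠ b)
    (h2 : ¬((a = j ∧ b = k) ∨ (a = k ∧ b = j))) :
    Rw j k a b = 1 := by rw [Rw]; rw [if_neg h2, if_pos h]

lemma Rw_im {n : ℕ} {j k a b : Fin n}
    (h2 : ¬((a = j ∧ b = k) ∨ (a = k ∧ b = j))) :
    (Rw j k a b).im = 0 := by
  rw [Rw, if_neg h2]; split_ifs <;> simp

lemma Rw_re_nonneg {n : ℕ} (j k a b : Fin n) : 0 ≤ (Rw j k a b).re := by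
  rw [Rw]; split_ifs <;> simp

lemma aux {n : ℕ}
    (G : SimpleGraph (Fin n)) [DecidableRel G.Adj]
    (ν : Fin n → Fin n → Polynomial ℂ) (hsymm : ∀ a b, ν a b = ν b a)
    (hzero : ∀ a b, ¬ G.Adj a b → ν a b = 0)
    (hval : ∀ a b, G.Adj a b → ν a b = 0 ∨ ν a b = -1 ∨ ν a b = X)
    (j0 j1 : Fin n) (hjj : j0 ≠ j1) :
    (∀ a b : Fin n, G.Adj a b → ν a b = -1 →
        ∃ c d : Fin n, G.Adj c d ∧ ν c d = X ∧
          (c = a ∨ c = b ∨ d = a ∨ d = b) ∧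
          ¬(c = a ∧ d = b) ∧ ¬(c = b ∧ d = a)) ↔
    ∀ g : Fin n ≃ Fin n, ∀ m : ℤ,
      (∑ p ∈ pairs n,
          ν p.1 p.2 * C (Rw j0 j1 (g p.1) (g p.2))) ≠
        C ((m : ℂ) - Complex.I) := by
  have tri : ∀ a b : Fin n, ν a b = 0 ∨ ν a b = -1 ∨ ν a b = X := fun a b => by
    by_cases h : G.Adj a b
    · exact hval a b h
    · exact Or.inl (hzero a b h)
  constructor
  · intro hER g m hS
    set u := g.symm j0 with hu
    set v := g.symm j1 with hv
    have hgu : g u = j0 := g.apply_symm_apply j0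
    have hgv : g v = j1 := g.apply_symm_apply j1
    have huv : u ≠ v := fun h => hjj (by rw [← hgu, ← hgv, h])
    set q : Fin n × Fin n := if u < v then (u, v) else (v, u) with hq
    have hq1 : q ∈ pairs n := by
      rcases lt_or_gt_of_ne huv with h | h
      · rw [hq, if_pos h]; simp [pairs, h]
      · rw [hq, if_neg (asymm h)]; simp [pairs, h]
    have hqI : (g q.1 = j0 ∧ g q.2 = j1) ∨ (g q.1 = j1 ∧ g q.2 = j0) := by
      rw [hq]; split_ifs <;> simp [hgu, hgv]
    have hνq : ν q.1 q.2 = ν u v := by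
      rw [hq]; split_ifs with h
      · rfl
      · exact hsymm v u
    -- step 1 : ν u v = -1
    have h0 := congrArg (fun P => (P.coeff 0).im) hS
    simp only [finset_sum_coeff, coeff_mul_C, Complex.im_sum, coeff_C_zero,
      Complex.sub_im, Complex.intCast_im, Complex.I_im, zero_sub] at h0
    have hterm : ∀ p ∈ pairs n, p ≠ q →
        (((ν p.1 p.2).coeff 0) * Rw j0 j1 (g p.1) (g p.2)).im = 0 := by
      intro p hp hpq
      have hlt : p.1 < p.2 := by simpa [pairs] using hp
      have hnI : ¬((g p.1 = j0 ∧ g p.2 = j1) ∨ (g p.1 = j1 ∧ g p.2 = j0)) := by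
        rintro (⟨h1, h2⟩ | ⟨h1, h2⟩)
        · have e1 : p.1 = u := by rw [hu, ← h1, Equiv.symm_apply_apply]
          have e2 : p.2 = v := by rw [hv, ← h2, Equiv.symm_apply_apply]
          apply hpq
          rw [hq, if_pos (e1 ▸ e2 ▸ hlt)]
          exact Prod.ext e1 e2
        · have e1 : p.1 = v := by rw [hv, ← h1, Equiv.symm_apply_apply]
          have e2 : p.2 = u := by rw [hu, ← h2, Equiv.symm_apply_apply]
          apply hpq
          rw [hq, if_neg (by rw [← e1, ← e2]; exact asymm hlt)]
          exact Prod.ext e1 e2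
      have him0 : ((ν p.1 p.2).coeff 0).im = 0 := by
        rcases tri p.1 p.2 with h | h | h <;> simp [h]
      rw [Complex.mul_im, him0, Rw_im hnI]
      ring
    rw [Finset.sum_eq_single q hterm (fun h => absurd hq1 h)] at h0
    rw [Rw_eq_I hqI, hνq, Complex.mul_im, Complex.I_im, Complex.I_re, mul_zero,
      mul_one, add_zero] at h0
    have hνuv : ν u v = -1 := by
      rcases tri u v with h | h | h
      · rw [h] at h0; norm_num at h0
      · exact h
      · rw [h] at h0; norm_num at h0
    have hadj : G.Adj u v := by
      by_contra hc
      rw [hzero u v hc] at hνuv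
      have : ((0 : Polynomial ℂ).coeff 0) = ((-1 : Polynomial ℂ).coeff 0) := by rw [hνuv]
      simp at this
    -- step 2 : contradiction via coeff 1
    obtain ⟨c, d, hcd, hX, htouch, hne1, hne2⟩ := hER u v hadj hνuv
    have hcdne : c ≠ d := hcd.ne
    set r : Fin n × Fin n := if c < d then (c, d) else (d, c) with hr
    have hr1 : r ∈ pairs n := by
      rcases lt_or_gt_of_ne hcdne with h | h
      · rw [hr, if_pos h]; simp [pairs, h]
      · rw [hr, if_neg (asymm h)]; simp [pairs, h]
    have h1 : ∑ p ∈ pairs n,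
        (((ν p.1 p.2).coeff 1) * Rw j0 j1 (g p.1) (g p.2)).re = 0 := by
      have hh := congrArg (fun P => (P.coeff 1).re) hS
      simpa only [finset_sum_coeff, coeff_mul_C, Complex.re_sum, coeff_C,
        if_neg (one_ne_zero), Complex.zero_re] using hh
    have hnonneg : ∀ p ∈ pairs n,
        0 ≤ (((ν p.1 p.2).coeff 1) * Rw j0 j1 (g p.1) (g p.2)).re := by
      intro p _
      rcases tri p.1 p.2 with h | h | h
      · simp [h]
      · simp [h, coeff_one]
      · rw [h, coeff_X_one, one_mul]; exact Rw_re_nonneg _ _ _ _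
    rw [Finset.sum_eq_zero_iff_of_nonneg hnonneg] at h1
    have hzr := h1 r hr1
    have hνr : ν r.1 r.2 = X := by
      rw [hr]; split_ifs with h
      · exact hX
      · exact (hsymm d c).trans hX
    have inj1 : ∀ x : Fin n, g x = j0 → x = u := fun x hx => by
      rw [hu, ← hx, Equiv.symm_apply_apply]
    have inj2 : ∀ x : Fin n, g x = j1 → x = v := fun x hx => by
      rw [hv, ← hx, Equiv.symm_apply_apply]
    have hRw1 : Rw j0 j1 (g r.1) (g r.2) = 1 := by
      apply Rw_eq_one
      · constructor
        · have : (g c = j0 ∨ g d = j0) ∨ (g c = j1 ∨ g d = j1) := by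
            rcases htouch with h | h | h | h <;> subst h <;> simp [hgu, hgv]
          rw [hr]
          rcases this with (h | h) | (h | h) <;>
            split_ifs <;> simp [h]
        · have : r.1 ≠ r.2 := by rw [hr]; split_ifs <;> simp [hcdne, hcdne.symm]
          exact fun hgg => this (g.injective hgg)
      · rintro (⟨e1, e2⟩ | ⟨e1, e2⟩)
        · have e1' := inj1 _ e1
          have e2' := inj2 _ e2
          rw [hr] at e1' e2'
          split_ifs at e1' e2'
          · exact hne1 ⟨e1', e2'⟩
          · exact hne2 ⟨e2', e1'⟩
        · have e1' := inj2 _ e1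
          have e2' := inj1 _ e2
          rw [hr] at e1' e2'
          split_ifs at e1' e2'
          · exact hne2 ⟨e1', e2'⟩
          · exact hne1 ⟨e2', e1'⟩
    rw [hνr, hRw1, coeff_X_one, one_mul] at hzr
    norm_num at hzr
  · intro h a b hab hν
    by_contra hcon
    push_neg at hcon
    have hab' : a ≠ b := hab.ne
    set e0 := Equiv.swap a j0 with he0
    set g := e0.trans (Equiv.swap (e0 b) j1) with hg
    have he0b : e0 b ≠ j0 := by
      intro hh
      apply hab'
      have : e0 b = e0 a := by rw [hh, he0, Equiv.swap_apply_left]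
      exact (e0.injective this).symm
    have hga : g a = j0 := by
      have : g a = Equiv.swap (e0 b) j1 j0 := by
        rw [hg, Equiv.trans_apply, he0, Equiv.swap_apply_left]
      rw [this, Equiv.swap_apply_of_ne_of_ne (Ne.symm he0b) hjj]
    have hgb : g b = j1 := by
      rw [hg, Equiv.trans_apply, Equiv.swap_apply_left]
    set q : Fin n × Fin n := if a < b then (a, b) else (b, a) with hq
    have hq1 : q ∈ pairs n := by
      rcases lt_or_gt_of_ne hab' with hh | hh
      · rw [hq, if_pos hh]; simp [pairs, hh]
      · rw [hq, if_neg (asymm hh)]; simp [pairs, hh]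
    have hνq : ν q.1 q.2 = ν a b := by
      rw [hq]; split_ifs with hh
      · rfl
      · exact hsymm b a
    have wq : Rw j0 j1 (g q.1) (g q.2) = Complex.I := by
      apply Rw_eq_I
      rw [hq]; split_ifs <;> simp [hga, hgb]
    have inj1 : ∀ x : Fin n, g x = j0 → x = a := fun x hx =>
      g.injective (hx.trans hga.symm)
    have inj2 : ∀ x : Fin n, g x = j1 → x = b := fun x hx =>
      g.injective (hx.trans hgb.symm)
    have key : ∀ p ∈ (pairs n).erase q,
        ∃ k : ℤ, ν p.1 p.2 * C (Rw j0 j1 (g p.1) (g p.2)) = C ((k : ℂ)) := by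
      intro p hp
      have hpq : p ≠ q := Finset.ne_of_mem_erase hp
      have hpp : p ∈ pairs n := Finset.mem_of_mem_erase hp
      have hlt : p.1 < p.2 := by simpa [pairs] using hpp
      rw [Rw]
      split_ifs with hI h1
      · exfalso
        rcases hI with ⟨e1, e2⟩ | ⟨e1, e2⟩
        · have e1' : p.1 = a := inj1 _ e1
          have e2' : p.2 = b := inj2 _ e2
          apply hpq
          rw [hq, if_pos (e1' ▸ e2' ▸ hlt)]
          exact Prod.ext e1' e2'
        · have e1' : p.1 = b := inj2 _ e1
          have e2' : p.2 = a := inj1 _ e2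
          apply hpq
          rw [hq, if_neg (by rw [← e1', ← e2']; exact asymm hlt)]
          exact Prod.ext e1' e2'
      · have htouch : p.1 = a ∨ p.1 = b ∨ p.2 = a ∨ p.2 = b := by
          rcases h1.1 with (hh | hh) | (hh | hh)
          · exact Or.inl (inj1 _ hh)
          · exact Or.inr (Or.inr (Or.inl (inj1 _ hh)))
          · exact Or.inr (Or.inl (inj2 _ hh))
          · exact Or.inr (Or.inr (Or.inr (inj2 _ hh)))
        have hnX : ν p.1 p.2 ≠ X := by
          intro hx
          have hadj : G.Adj p.1 p.2 := by
            by_contra hc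
            rw [hzero _ _ hc] at hx
            exact X_ne_zero hx.symm
          have hcc := hcon p.1 p.2 hadj hx htouch
          by_cases hcase : p.1 = a ∧ p.2 = b
          · apply hpq
            rw [hq, if_pos (hcase.1 ▸ hcase.2 ▸ hlt)]
            exact Prod.ext hcase.1 hcase.2
          · obtain ⟨e1, e2⟩ := hcc (fun h1 h2 => hcase ⟨h1, h2⟩)
            apply hpq
            rw [hq, if_neg (by rw [← e1, ← e2]; exact asymm hlt)]
            exact Prod.ext e1 e2
        rcases tri p.1 p.2 with hh | hh | hh
        · exact ⟨0, by simp [hh]⟩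
        · exact ⟨-1, by rw [hh]; simp⟩
        · exact absurd hh hnX
      · exact ⟨0, by simp⟩
    obtain ⟨k, hk⟩ :
        ∃ k : ℤ, ∑ p ∈ (pairs n).erase q,
            ν p.1 p.2 * C (Rw j0 j1 (g p.1) (g p.2)) = C ((k : ℂ)) := by
      refine Finset.sum_induction _ (fun x => ∃ k : ℤ, x = C ((k : ℂ))) ?_ ⟨0, by simp⟩ key
      rintro x y ⟨k1, rfl⟩ ⟨k2, rfl⟩
      exact ⟨k1 + k2, by rw [← C_add]; norm_cast⟩
    apply h g k
    rw [← Finset.sum_erase_add _ _ hq1, hk, hνq, hν, wq]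
    rw [sub_eq_add_neg, C_add, C_neg]
    ring

/-- For an edge coloring `ν` of `G` by `{0, -1, y}` (zero on non-edges), the induced
`f̃ : E(G) → {0,1,2}` (`-1 ↦ 0`, `0 ↦ 1`, `y ↦ 2`) is an edge Roman dominating function
(every edge with value `-1` is adjacent to a distinct edge with value `y`)
iff for every bijection `g` the sum `s(H *_g R(1,2))` is not of the form `-i + m`,
`m ∈ ℤ` (i.e. is not the constant polynomial `m - i`). -/
theorem edgeRoman_iff_spec {n : ℕ} (hn : 2 ≤ n)
    (G : SimpleGraph (Fin n)) [DecidableRel G.Adj]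
    (ν : Fin n → Fin n → Polynomial ℂ) (hsymm : ∀ a b, ν a b = ν b a)
    (hzero : ∀ a b, ¬ G.Adj a b → ν a b = 0)
    (hval : ∀ a b, G.Adj a b → ν a b = 0 ∨ ν a b = -1 ∨ ν a b = X) :
    (∀ a b : Fin n, G.Adj a b → ν a b = -1 →
        ∃ c d : Fin n, G.Adj c d ∧ ν c d = X ∧
          (c = a ∨ c = b ∨ d = a ∨ d = b) ∧
          ¬(c = a ∧ d = b) ∧ ¬(c = b ∧ d = a)) ↔
    ∀ g : Fin n ≃ Fin n, ∀ m : ℤ,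
      (∑ p ∈ pairs n,
          ν p.1 p.2 * C (Rw (⟨0, by omega⟩ : Fin n) ⟨1, by omega⟩ (g p.1) (g p.2))) ≠
        C ((m : ℂ) - Complex.I) := by
  exact aux G ν hsymm hzero hval _ _ (by simp)
end

section
/- Let G be a finite simple graph on n vertices and let k ≥ 1. Let C(1,...,k)_n denote the set of ℕ-weighted complete graphs on n vertices obtained as Σ_{i=1}^{k-1} (I(K_n \ e)^{*∞} ∪ {I(K_n)}) + I(K_n). Then the set I(G) * C(1,...,k)_n equals the set of all weighted complete graphs obtained by assigning each edge of G a value in {1,...,k} and each non-edge of G the value 0. -/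
/-- `ℕ`-weightings of the complete graph on `n` vertices. -/
abbrev Wt (n : ℕ) := Fin n → Fin n → ℕ

/-- The `*`-product of two families of weighted complete graphs. -/
def fmul {n : ℕ} (A B : Set (Wt n)) : Set (Wt n) :=
  {w | ∃ H ∈ A, ∃ K ∈ B, ∃ f : Fin n ≃ Fin n, w = fun a b => H a b * K (f a) (f b)}

/-- `fpow A m` is the `(m+1)`-fold `*`-power `A^{*(m+1)}`. -/
def fpow {n : ℕ} (A : Set (Wt n)) : ℕ → Set (Wt n)
  | 0 => A
  | m + 1 => fmul (fpow A m) A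

/-- Edge-wise addition of families of weighted complete graphs. -/
def fadd {n : ℕ} (A B : Set (Wt n)) : Set (Wt n) :=
  {w | ∃ a ∈ A, ∃ b ∈ B, w = fun x y => a x y + b x y}

/-- `I(K_n)`: weight `1` on every edge. -/
def onesW (n : ℕ) : Wt n := fun a b => if a = b then 0 else 1

/-- `I(K_n \ e)` where `e = {u,v}`. -/
def KminusE {n : ℕ} (u v : Fin n) : Wt n :=
  fun a b => if a ≠ b ∧ ¬((a = u ∧ b = v) ∨ (a = v ∧ b = u)) then 1 else 0

/-- `Cfam u v m j` is `∑_{i=1}^{j} (I(K_n \ e)^{*∞} ∪ {I(K_n)}) + I(K_n)`, the family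
`C(1,…,j+1)_n`, where `I(K_n \ e)^{*∞}` is realized by the stabilized power `fpow _ m`. -/
def Cfam {n : ℕ} (u v : Fin n) (m : ℕ) : ℕ → Set (Wt n)
  | 0 => {onesW n}
  | j + 1 => fadd (Cfam u v m j) (fpow {KminusE u v} m ∪ {onesW n})

/-!
The stable power `I(K_n \ e)^{*∞}` is closed under multiplication by every relabelled copy of
`I(K_n \ e)`, and such products can switch off any set of edges; so it consists of all
symmetric `0/1` weightings vanishing on the diagonal and on `e = uv`. Consequently
`C(1,…,j+1)_n` contains every symmetric weighting `c` with off-diagonal values in `{1,…,j+1}`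
that is minimal on `uv`: split `c` as `min c j + (c - j)`, where the top layer `c - j` is
`I(K_n)` or vanishes on `uv`. Conversely every element of `C(1,…,j+1)_n` has its off-diagonal
values in `{1,…,j+1}`. A coloring `w` of `G` is then `I(G)` times such a weighting, relabelled
so that a minimal edge lands on `uv`.
-/

theorem Equiv.exists_apply_eq_and_apply_eq {α : Type*} [DecidableEq α] {x y u v : α}
    (hxy : x ≠ y) (huv : u ≠ v) :
    ∃ f : α ≃ α, f x = u ∧ f y = v := by
  set g := Equiv.swap u x
  have hgx : g x = u := Equiv.swap_apply_right u x
  have hgy : g y ≠ u := hgx ▸ g.injective.ne hxy.symm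
  refine ⟨g.trans (Equiv.swap v (g y)), ?_, Equiv.swap_apply_right v (g y)⟩
  simp only [Equiv.trans_apply, hgx]
  exact Equiv.swap_apply_of_ne_of_ne huv hgy.symm

def symmWeightings (n : ℕ) (s : Set ℕ) : Set (Wt n) :=
  {w | (∀ a, w a a = 0) ∧ (∀ a b, w a b = w b a) ∧ ∀ a b, a ≠ b → w a b ∈ s}

variable {n : ℕ}

def IsMinOffDiag (c : Wt n) (u v : Fin n) : Prop :=
  ∀ a b, a ≠ b → c u v ≤ c a b

namespace symmWeightings

variable {s t r : Set ℕ} {w w' : Wt n}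

theorem comp_equiv_mem (hw : w ∈ symmWeightings n s) (f : Fin n ≃ Fin n) :
    (fun a b => w (f a) (f b)) ∈ symmWeightings n s :=
  ⟨fun a => hw.1 (f a), fun a b => hw.2.1 (f a) (f b),
    fun a b hab => hw.2.2 (f a) (f b) (f.injective.ne hab)⟩

theorem mul_mem (hw : w ∈ symmWeightings n s) (hw' : w' ∈ symmWeightings n t)
    (hst : ∀ x ∈ s, ∀ y ∈ t, x * y ∈ r) :
    (fun a b => w a b * w' a b) ∈ symmWeightings n r :=
  ⟨fun a => by simp only [hw.1 a, zero_mul],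
    fun a b => show w a b * w' a b = w b a * w' b a by rw [hw.2.1 a b, hw'.2.1 a b],
    fun a b hab => hst _ (hw.2.2 a b hab) _ (hw'.2.2 a b hab)⟩

theorem add_mem (hw : w ∈ symmWeightings n s) (hw' : w' ∈ symmWeightings n t)
    (hst : ∀ x ∈ s, ∀ y ∈ t, x + y ∈ r) :
    (fun a b => w a b + w' a b) ∈ symmWeightings n r :=
  ⟨fun a => by simp only [hw.1 a, hw'.1 a],
    fun a b => show w a b + w' a b = w b a + w' b a by rw [hw.2.1 a b, hw'.2.1 a b],
    fun a b hab => hst _ (hw.2.2 a b hab) _ (hw'.2.2 a b hab)⟩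

theorem onesW_mem (hs : 1 ∈ s) : onesW n ∈ symmWeightings n s :=
  ⟨fun a => if_pos rfl, fun a b => if_congr eq_comm rfl rfl,
    fun a b hab => by simpa only [onesW, if_neg hab] using hs⟩

theorem KminusE_mem (u v : Fin n) : KminusE u v ∈ symmWeightings n (Set.Iic 1) := by
  refine ⟨fun a => by simp [KminusE], fun a b => if_congr ?_ rfl rfl,
    fun a b _ => by unfold KminusE; split <;> simp⟩
  constructor <;> rintro ⟨h1, h2⟩ <;> exact ⟨Ne.symm h1, by tauto⟩

end symmWeightings

theorem KminusE_apply_equiv (f : Fin n ≃ Fin n) (x y a b : Fin n) :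
    KminusE (f x) (f y) (f a) (f b) = KminusE x y a b := by
  simp only [KminusE, ne_eq, EmbeddingLike.apply_eq_iff_eq]

theorem KminusE_apply_eq_one {w : Wt n} (hw : ∀ a b, w a b = w b a) {x y a b : Fin n}
    (hab : a ≠ b) (hxy : w x y = 0) (hab0 : w a b ≠ 0) : KminusE x y a b = 1 := by
  refine if_pos ⟨hab, ?_⟩
  rintro (⟨rfl, rfl⟩ | ⟨rfl, rfl⟩)
  exacts [hab0 hxy, hab0 (hw _ _ ▸ hxy)]

theorem KminusE_mul_self (u v : Fin n) :
    (fun a b => KminusE u v a b * KminusE u v a b) = KminusE u v := by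
  funext a b
  unfold KminusE
  split <;> simp

theorem KminusE_mem_fpow (u v : Fin n) : ∀ j, KminusE u v ∈ fpow {KminusE u v} j
  | 0 => rfl
  | j + 1 => ⟨_, KminusE_mem_fpow u v j, _, rfl, Equiv.refl _, (KminusE_mul_self u v).symm⟩

theorem fpow_KminusE_subset (u v : Fin n) :
    ∀ j, fpow {KminusE u v} j ⊆ symmWeightings n (Set.Iic 1)
  | 0 => by
      rintro w rfl
      exact symmWeightings.KminusE_mem u v
  | j + 1 => by
      rintro w ⟨H, hH, K, rfl, f, rfl⟩
      exact symmWeightings.mul_mem (fpow_KminusE_subset u v j hH)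
        (symmWeightings.comp_equiv_mem (symmWeightings.KminusE_mem u v) f)
        fun x hx y hy => Set.mem_Iic.mpr (mul_le_one' hx hy)

theorem Cfam_subset (u v : Fin n) (m : ℕ) :
    ∀ j, Cfam u v m j ⊆ symmWeightings n (Set.Icc 1 (j + 1))
  | 0 => by
      rintro w rfl
      exact symmWeightings.onesW_mem ⟨le_rfl, le_rfl⟩
  | j + 1 => by
      rintro w ⟨c, hc, t, ht, rfl⟩
      have htT : t ∈ symmWeightings n (Set.Iic 1) := by
        rcases ht with ht | rfl
        · exact fpow_KminusE_subset u v m ht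
        · exact symmWeightings.onesW_mem (Set.mem_Iic.mpr le_rfl)
      exact symmWeightings.add_mem (Cfam_subset u v m j hc) htT
        fun x hx y hy => ⟨le_add_right hx.1, add_le_add hx.2 hy⟩

section Stable

variable {u v : Fin n} {m : ℕ} (huv : u ≠ v)
  (hstab : fpow {KminusE u v} (m + 1) = fpow {KminusE u v} m)
include huv hstab

theorem mul_KminusE_mem_fpow {w : Wt n} (hw : w ∈ fpow {KminusE u v} m) {x y : Fin n}
    (hxy : x ≠ y) : (fun a b => w a b * KminusE x y a b) ∈ fpow {KminusE u v} m := by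
  obtain ⟨f, hx, hy⟩ := Equiv.exists_apply_eq_and_apply_eq hxy huv
  rw [← hstab]
  exact ⟨w, hw, _, rfl, f, by simp only [← hx, ← hy, KminusE_apply_equiv]⟩

theorem mul_prod_KminusE_mem_fpow {w : Wt n} (hw : w ∈ fpow {KminusE u v} m)
    (Z : Finset (Fin n × Fin n)) (hZ : ∀ p ∈ Z, p.1 ≠ p.2) :
    (fun a b => w a b * ∏ p ∈ Z, KminusE p.1 p.2 a b) ∈ fpow {KminusE u v} m := by
  classical
  induction Z using Finset.induction_on with
  | empty => simpa using hw
  | insert p Z hp ih =>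
    have hmem := mul_KminusE_mem_fpow huv hstab
      (ih fun q hq => hZ q (Finset.mem_insert_of_mem hq)) (hZ p (Finset.mem_insert_self p Z))
    convert hmem using 1
    funext a b
    rw [Finset.prod_insert hp]
    ring

theorem mem_fpow_of_mem_symmWeightings {w : Wt n} (hw : w ∈ symmWeightings n (Set.Iic 1))
    (hwuv : w u v = 0) : w ∈ fpow {KminusE u v} m := by
  classical
  set Z := Finset.univ.filter fun p : Fin n × Fin n => p.1 ≠ p.2 ∧ w p.1 p.2 = 0
  convert mul_prod_KminusE_mem_fpow huv hstab (KminusE_mem_fpow u v m) Z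
    (fun p hp => (Finset.mem_filter.mp hp).2.1) using 1
  funext a b
  by_cases hab : a = b
  · subst hab
    simp [hw.1 a, KminusE]
  by_cases h0 : w a b = 0
  · rw [h0, Finset.prod_eq_zero (i := (a, b)) (by simp [Z, hab, h0]) (by simp [KminusE]),
      mul_zero]
  have h1 : w a b = 1 := le_antisymm (hw.2.2 a b hab) (Nat.one_le_iff_ne_zero.mpr h0)
  rw [h1, KminusE_apply_eq_one hw.2.1 hab hwuv h0, one_mul, eq_comm]
  exact Finset.prod_eq_one fun p hp =>
    KminusE_apply_eq_one hw.2.1 hab (Finset.mem_filter.mp hp).2.2 h0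

theorem tsub_mem_fpow_union {j : ℕ} {c : Wt n}
    (hc : c ∈ symmWeightings n (Set.Icc 1 (j + 1))) (hmin : IsMinOffDiag c u v) :
    (fun a b => c a b - j) ∈ fpow {KminusE u v} m ∪ {onesW n} := by
  obtain ⟨-, huv_le⟩ := hc.2.2 u v huv
  by_cases htop : c u v = j + 1
  · right
    funext a b
    by_cases hab : a = b
    · simp [hab, hc.1 b, onesW]
    · obtain ⟨-, hab_le⟩ := hc.2.2 a b hab
      have := hmin a b hab
      simp only [onesW, if_neg hab]
      omega
  · left
    refine mem_fpow_of_mem_symmWeightings huv hstab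
      ⟨fun a => ?_, fun a b => ?_, fun a b hab => ?_⟩ (by show c u v - j = 0; omega)
    · simp only [hc.1 a, zero_tsub]
    · exact congrArg (· - j) (hc.2.1 a b)
    · obtain ⟨-, hab_le⟩ := hc.2.2 a b hab
      simp only [Set.mem_Iic]
      omega

theorem mem_Cfam :
    ∀ j, ∀ c ∈ symmWeightings n (Set.Icc 1 (j + 1)), IsMinOffDiag c u v → c ∈ Cfam u v m j
  | 0, c, hc, _ => by
      show c = onesW n
      funext a b
      by_cases hab : a = b
      · simp [hab, hc.1 b, onesW]
      · obtain ⟨hab_ge, hab_le⟩ := hc.2.2 a b hab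
        simp only [onesW, if_neg hab]
        omega
  | j + 1, c, hc, hmin => by
      refine ⟨fun a b => min (c a b) (j + 1), mem_Cfam j _ ?_ ?_, _,
        tsub_mem_fpow_union huv hstab hc hmin, ?_⟩
      · refine ⟨fun a => by simp [hc.1 a], fun a b => congrArg (min · (j + 1)) (hc.2.1 a b),
          fun a b hab => ?_⟩
        obtain ⟨hab_ge, hab_le⟩ := hc.2.2 a b hab
        exact ⟨le_min hab_ge (Nat.le_add_left 1 j), min_le_right _ _⟩
      · exact fun a b hab => min_le_min_right _ (hmin a b hab)
      · funext a b
        show c a b = min (c a b) (j + 1) + (c a b - (j + 1))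
        omega

end Stable

theorem fmul_mono_right {A B B' : Set (Wt n)} (h : B ⊆ B') : fmul A B ⊆ fmul A B' := by
  rintro w ⟨H, hH, K, hK, f, rfl⟩
  exact ⟨H, hH, K, h hK, f, rfl⟩

theorem exists_isMinOffDiag (c : Wt n) {u v : Fin n} (huv : u ≠ v) :
    ∃ p q, p ≠ q ∧ IsMinOffDiag c p q := by
  obtain ⟨⟨p, q⟩, hpq, hmin⟩ := Finset.univ.offDiag.exists_min_image (fun r => c r.1 r.2)
    ⟨(u, v), Finset.mem_offDiag.mpr ⟨Finset.mem_univ _, Finset.mem_univ _, huv⟩⟩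
  exact ⟨p, q, (Finset.mem_offDiag.mp hpq).2.2, fun a b hab =>
    hmin (a, b) (Finset.mem_offDiag.mpr ⟨Finset.mem_univ _, Finset.mem_univ _, hab⟩)⟩

theorem IsMinOffDiag.comp_equiv {c : Wt n} {u v : Fin n} (f : Fin n ≃ Fin n)
    (h : IsMinOffDiag c (f u) (f v)) : IsMinOffDiag (fun a b => c (f a) (f b)) u v :=
  fun a b hab => h (f a) (f b) (f.injective.ne hab)

section Colorings

variable (G : SimpleGraph (Fin n)) [DecidableRel G.Adj] (k : ℕ)

def adjWt : Wt n := fun a b => if G.Adj a b then 1 else 0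

def colorings : Set (Wt n) :=
  {w | (∀ a b, w a b = w b a) ∧ (∀ a b, G.Adj a b → w a b ∈ Finset.Icc 1 k) ∧
    ∀ a b, ¬ G.Adj a b → w a b = 0}

theorem fmul_adjWt_subset_colorings :
    fmul {adjWt G} (symmWeightings n (Set.Icc 1 k)) ⊆ colorings G k := by
  rintro w ⟨H, rfl, c, hc, f, rfl⟩
  refine ⟨fun a b => ?_, fun a b hab => ?_, fun a b hab => ?_⟩
  · simp only [adjWt, G.adj_comm a b, hc.2.1 (f a) (f b)]
  · simpa only [adjWt, if_pos hab, one_mul, Finset.mem_Icc, Set.mem_Icc] using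
      hc.2.2 (f a) (f b) (f.injective.ne hab.ne)
  · simp only [adjWt, if_neg hab, zero_mul]

theorem colorings_subset_fmul_adjWt {u v : Fin n} (huv : u ≠ v) (hk : 1 ≤ k) :
    colorings G k ⊆
      fmul {adjWt G} {c | c ∈ symmWeightings n (Set.Icc 1 k) ∧ IsMinOffDiag c u v} := by
  rintro w ⟨hsymm, hedge, hnon⟩
  set c : Wt n := fun x y => if x = y then 0 else if G.Adj x y then w x y else k
  have hc : c ∈ symmWeightings n (Set.Icc 1 k) := by
    refine ⟨fun a => if_pos rfl, fun a b => ?_, fun a b hab => ?_⟩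
    · simp only [c, eq_comm, G.adj_comm a b, hsymm a b]
    · by_cases hadj : G.Adj a b
      · simpa only [c, if_neg hab, if_pos hadj, Finset.mem_Icc, Set.mem_Icc] using
          hedge a b hadj
      · simp only [c, if_neg hab, if_neg hadj]
        exact ⟨hk, le_rfl⟩
  obtain ⟨p, q, hpq, hmin⟩ := exists_isMinOffDiag c huv
  obtain ⟨g, hgu, hgv⟩ := Equiv.exists_apply_eq_and_apply_eq huv hpq
  refine ⟨_, rfl, _, ⟨symmWeightings.comp_equiv_mem hc g,
    IsMinOffDiag.comp_equiv g (hgu ▸ hgv ▸ hmin)⟩, g.symm, ?_⟩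
  funext a b
  simp only [Equiv.apply_symm_apply, adjWt]
  by_cases hadj : G.Adj a b
  · simp only [c, if_pos hadj, if_neg hadj.ne, one_mul]
  · simp only [if_neg hadj, zero_mul, hnon a b hadj]

end Colorings

theorem IG_mul_C_eq_colorings_general {n : ℕ} (k : ℕ) (hk : 1 ≤ k)
    (u v : Fin n) (huv : u ≠ v) (m : ℕ)
    (hstab : fpow {KminusE u v} (m + 1) = fpow {KminusE u v} m)
    (G : SimpleGraph (Fin n)) [DecidableRel G.Adj] :
    fmul {fun a b => if G.Adj a b then 1 else 0} (Cfam u v m (k - 1)) =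
      {w : Wt n | (∀ a b, w a b = w b a) ∧
        (∀ a b, G.Adj a b → w a b ∈ Finset.Icc 1 k) ∧
        ∀ a b, ¬ G.Adj a b → w a b = 0} := by
  change fmul {adjWt G} _ = colorings G k
  have hk' : k - 1 + 1 = k := Nat.sub_add_cancel hk
  apply subset_antisymm
  · refine (fmul_mono_right ?_).trans (fmul_adjWt_subset_colorings G k)
    simpa only [hk'] using Cfam_subset u v m (k - 1)
  · refine (colorings_subset_fmul_adjWt G k huv hk).trans (fmul_mono_right ?_)
    rintro c ⟨hc, hmin⟩
    exact mem_Cfam huv hstab (k - 1) c (hk' ▸ hc) hmin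

/-- `I(G) * C(1,…,k)_n` is exactly the set of all (possibly non-proper) `k`-colorings of
`G`: each edge of `G` gets a value in `{1,…,k}` and each non-edge gets `0`. -/
theorem IG_mul_C_eq_colorings {n : ℕ} (hn : 2 ≤ n) (k : ℕ) (hk : 1 ≤ k)
    (u v : Fin n) (huv : u ≠ v) (m : ℕ)
    (hstab : fpow {KminusE u v} (m + 1) = fpow {KminusE u v} m)
    (G : SimpleGraph (Fin n)) [DecidableRel G.Adj] :
    fmul {fun a b => if G.Adj a b then 1 else 0} (Cfam u v m (k - 1)) =
      {w : Wt n | (∀ a b, w a b = w b a) ∧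
        (∀ a b, G.Adj a b → w a b ∈ Finset.Icc 1 k) ∧
        ∀ a b, ¬ G.Adj a b → w a b = 0} :=
  IG_mul_C_eq_colorings_general k hk u v huv m hstab G
end
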